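/- arXiv:2505.24254 — 3 statements merged into one kernel-verified Lean document; each statement's English description precedes it below -/
import Mathlib

section
/- Let d ≥ K ≥ 2 and let M ∈ ℝ^{d×K} be a matrix whose columns sum to zero, i.e., M·1_K = 0. Let U' = sqrt((K−1)/K) · M · P_K where P_K = I_K − (1/K)·1_K·1_Kᵀ, and let U' = W Σ Vᵀ be a thin singular value decomposition (W ∈ ℝ^{d×K} with WᵀW = I_K, V ∈ ℝ^{K×K} orthogonal, Σ ∈ ℝ^{K×K} diagonal with nonnegative entries). Define E* = sqrt(K/(K−1)) · (W Vᵀ) · P_K. Then for every matrix U ∈ ℝ^{d×K} with orthonormal columns (UᵀU = I_K), setting E = sqrt(K/(K−1)) · U · P_K, one has ‖M − E*‖_F ≤ ‖M − E‖_F. That is, E* is a simplex ETF matrix nearest to M in Frobenius norm among all simplex ETF matrices constructed from orthonormal-column matrices U. -/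
/-!
Since `M * P_K = M` and `P_K` is a symmetric idempotent, for every `U` with orthonormal columns
`‖M - a U P_K‖_F² = ‖M‖_F² + a² tr P_K - 2a tr(Mᵀ U)` with `a = sqrt(K/(K-1))`, so minimizing the
distance means maximizing `tr(Mᵀ U)`. As `M` is a positive multiple of `W Σ Vᵀ`, this is the
orthogonal Procrustes problem: `tr(V Σ Wᵀ U) = tr(Σ · Wᵀ U V) ≤ tr Σ`, because the diagonal
entries of `Wᵀ (U V)` are inner products of unit vectors, and `U = W Vᵀ` attains `tr Σ`.
-/

open Matrix

/-- Frobenius norm of a real matrix: ‖A‖_F = sqrt(tr(AᵀA)). -/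
noncomputable def frobNorm {d K : ℕ} (A : Matrix (Fin d) (Fin K) ℝ) : ℝ :=
  Real.sqrt ((Aᵀ * A).trace)

/-- Centering matrix P_K = I_K − (1/K)·1_K·1_Kᵀ. -/
noncomputable def centering (K : ℕ) : Matrix (Fin K) (Fin K) ℝ :=
  1 - (K : ℝ)⁻¹ • Matrix.of (fun _ _ => (1 : ℝ))

section Procrustes

variable {m n : Type*} [Fintype m] [Fintype n] [DecidableEq n]

lemma transpose_mul_self_mul {p : Type*} [DecidableEq p] {A : Matrix m n ℝ} {B : Matrix n p ℝ}
    (hA : Aᵀ * A = 1) (hB : Bᵀ * B = 1) : (A * B)ᵀ * (A * B) = 1 := by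
  rw [transpose_mul, Matrix.mul_assoc, ← Matrix.mul_assoc Aᵀ, hA, Matrix.one_mul, hB]

omit [Fintype n] in
lemma transpose_mul_diag_le_one {A B : Matrix m n ℝ}
    (hA : Aᵀ * A = 1) (hB : Bᵀ * B = 1) (i : n) : (Aᵀ * B) i i ≤ 1 := by
  have hnormA : ∑ k, A k i ^ 2 = 1 := by
    simpa [mul_apply, sq] using congrFun (congrFun hA i) i
  have hnormB : ∑ k, B k i ^ 2 = 1 := by
    simpa [mul_apply, sq] using congrFun (congrFun hB i) i
  have hcs := Finset.sum_mul_sq_le_sq_mul_sq Finset.univ (fun k => A k i) (fun k => B k i)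
  rw [hnormA, hnormB, one_mul] at hcs
  simp only [mul_apply, transpose_apply]
  nlinarith

omit [Fintype m] in
lemma trace_mul_le_trace_of_isDiag {S Q : Matrix n n ℝ} (hS : S.IsDiag)
    (hSnonneg : ∀ i, 0 ≤ S i i) (hQ : ∀ i, Q i i ≤ 1) : (S * Q).trace ≤ S.trace := by
  rw [← hS.diagonal_diag]
  simp only [trace, diag_apply, diagonal_mul, diagonal_apply_eq]
  exact Finset.sum_le_sum fun i _ => mul_le_of_le_one_right (hSnonneg i) (hQ i)

theorem trace_transpose_mul_le_procrustes {W X : Matrix m n ℝ} {S V : Matrix n n ℝ}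
    (hW : Wᵀ * W = 1) (hV : Vᵀ * V = 1) (hS : S.IsDiag) (hSnonneg : ∀ i, 0 ≤ S i i)
    (hX : Xᵀ * X = 1) : ((W * S * Vᵀ)ᵀ * X).trace ≤ ((W * S * Vᵀ)ᵀ * (W * Vᵀ)).trace := by
  have hpair : ∀ Y : Matrix m n ℝ, ((W * S * Vᵀ)ᵀ * Y).trace = (S * (Wᵀ * (Y * V))).trace := by
    intro Y
    rw [transpose_mul, transpose_mul, transpose_transpose, hS.isSymm.eq, trace_mul_cycle,
      trace_mul_comm, Matrix.mul_assoc]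
  have hWV : Wᵀ * (W * Vᵀ * V) = 1 := by rw [Matrix.mul_assoc, hV, Matrix.mul_one, hW]
  rw [hpair, hpair, hWV, Matrix.mul_one]
  exact trace_mul_le_trace_of_isDiag hS hSnonneg
    (transpose_mul_diag_le_one hW (transpose_mul_self_mul hX hV))

end Procrustes

lemma trace_transpose_mul_self_sub_smul {m n : Type*} [Fintype m] [Fintype n] [DecidableEq n]
    {M X : Matrix m n ℝ} {P : Matrix n n ℝ}
    (hPt : Pᵀ = P) (hPP : P * P = P) (hMP : M * P = M) (hX : Xᵀ * X = 1) (a : ℝ) :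
    ((M - a • (X * P))ᵀ * (M - a • (X * P))).trace =
      (Mᵀ * M).trace + a ^ 2 * P.trace - 2 * a * (Mᵀ * X).trace := by
  have hPM : P * Mᵀ = Mᵀ := by rw [← hPt, ← transpose_mul, hMP]
  have hcross : (Mᵀ * (X * P)).trace = (Mᵀ * X).trace := by
    rw [← Matrix.mul_assoc, trace_mul_cycle, hPM]
  have hcross' : ((X * P)ᵀ * M).trace = (Mᵀ * X).trace := by
    rw [← trace_transpose, transpose_mul, transpose_transpose, hcross]
  have hquad : ((X * P)ᵀ * (X * P)).trace = P.trace := by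
    rw [transpose_mul, hPt, Matrix.mul_assoc, ← Matrix.mul_assoc Xᵀ, hX, Matrix.one_mul, hPP]
  simp only [transpose_sub, transpose_smul, Matrix.sub_mul, Matrix.mul_sub, Matrix.smul_mul,
    Matrix.mul_smul, trace_sub, trace_smul, smul_eq_mul, hcross, hcross', hquad]
  ring

lemma ones_mul_ones (n : Type*) [Fintype n] :
    (of fun _ _ => (1 : ℝ) : Matrix n n ℝ) * of (fun _ _ => 1) =
      (Fintype.card n : ℝ) • of fun _ _ => 1 := by
  ext
  simp [mul_apply]

lemma centering_transpose (K : ℕ) : (centering K)ᵀ = centering K := by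
  ext i j
  simp [centering, one_apply, eq_comm]

lemma centering_mul_self (K : ℕ) : centering K * centering K = centering K := by
  rcases Nat.eq_zero_or_pos K with rfl | hK
  · exact Subsingleton.elim _ _
  have hscale : (K : ℝ)⁻¹ * ((K : ℝ)⁻¹ * K) = (K : ℝ)⁻¹ := by field_simp
  simp only [centering, sub_mul, mul_sub, one_mul, mul_one, Matrix.smul_mul, Matrix.mul_smul,
    ones_mul_ones, Fintype.card_fin, smul_smul, hscale, sub_self, sub_zero]

lemma mul_centering_of_mulVec_one {d K : ℕ} {M : Matrix (Fin d) (Fin K) ℝ}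
    (hM : M *ᵥ (fun _ => (1 : ℝ)) = 0) : M * centering K = M := by
  have hMJ : M * (of fun _ _ => (1 : ℝ) : Matrix (Fin K) (Fin K) ℝ) = 0 := by
    ext i j
    simpa [mul_apply, mulVec, dotProduct] using congrFun hM i
  rw [centering, Matrix.mul_sub, Matrix.mul_one, Matrix.mul_smul, hMJ, smul_zero, sub_zero]

theorem nearest_simplex_ETF_general (d K : ℕ) (hK : 2 ≤ K)
    (M : Matrix (Fin d) (Fin K) ℝ)
    (hM : M *ᵥ (fun _ => (1 : ℝ)) = 0)
    (W : Matrix (Fin d) (Fin K) ℝ) (S V : Matrix (Fin K) (Fin K) ℝ)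
    (hW : Wᵀ * W = 1) (hV : Vᵀ * V = 1)
    (hS : S.IsDiag) (hSnonneg : ∀ i, 0 ≤ S i i)
    (hSVD : Real.sqrt (((K : ℝ) - 1) / K) • (M * centering K) = W * S * Vᵀ)
    (Estar : Matrix (Fin d) (Fin K) ℝ)
    (hEstar : Estar = Real.sqrt ((K : ℝ) / ((K : ℝ) - 1)) • ((W * Vᵀ) * centering K)) :
    ∀ U : Matrix (Fin d) (Fin K) ℝ, Uᵀ * U = 1 →
      frobNorm (M - Estar) ≤
        frobNorm (M - Real.sqrt ((K : ℝ) / ((K : ℝ) - 1)) • (U * centering K)) := by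
  intro U hU
  have hMP := mul_centering_of_mulVec_one hM
  have hK' : (2 : ℝ) ≤ K := by exact_mod_cast hK
  have hc : 0 < Real.sqrt (((K : ℝ) - 1) / K) := Real.sqrt_pos.mpr (div_pos (by linarith) (by linarith))
  have hWV : (W * Vᵀ)ᵀ * (W * Vᵀ) = 1 :=
    transpose_mul_self_mul hW (by rwa [transpose_transpose, ← mul_eq_one_comm])
  have hpair : (Mᵀ * U).trace ≤ (Mᵀ * (W * Vᵀ)).trace := by
    have h := trace_transpose_mul_le_procrustes hW hV hS hSnonneg hU
    rw [← hSVD, hMP] at h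
    simp only [transpose_smul, Matrix.smul_mul, trace_smul, smul_eq_mul] at h
    exact le_of_mul_le_mul_left h hc
  rw [hEstar, frobNorm, frobNorm]
  apply Real.sqrt_le_sqrt
  rw [trace_transpose_mul_self_sub_smul (centering_transpose K) (centering_mul_self K) hMP hWV,
    trace_transpose_mul_self_sub_smul (centering_transpose K) (centering_mul_self K) hMP hU]
  gcongr

theorem nearest_simplex_ETF (d K : ℕ) (hK : 2 ≤ K) (hdK : K ≤ d)
    (M : Matrix (Fin d) (Fin K) ℝ)
    (hM : M *ᵥ (fun _ => (1 : ℝ)) = 0)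
    (W : Matrix (Fin d) (Fin K) ℝ) (S V : Matrix (Fin K) (Fin K) ℝ)
    (hW : Wᵀ * W = 1) (hV : Vᵀ * V = 1)
    (hS : S.IsDiag) (hSnonneg : ∀ i, 0 ≤ S i i)
    (hSVD : Real.sqrt (((K : ℝ) - 1) / K) • (M * centering K) = W * S * Vᵀ)
    (Estar : Matrix (Fin d) (Fin K) ℝ)
    (hEstar : Estar = Real.sqrt ((K : ℝ) / ((K : ℝ) - 1)) • ((W * Vᵀ) * centering K)) :
    ∀ U : Matrix (Fin d) (Fin K) ℝ, Uᵀ * U = 1 →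
      frobNorm (M - Estar) ≤
        frobNorm (M - Real.sqrt ((K : ℝ) / ((K : ℝ) - 1)) • (U * centering K)) :=
  nearest_simplex_ETF_general d K hK M hM W S V hW hV hS hSnonneg hSVD Estar hEstar
end

section
/- Let m ≥ n and let A ∈ ℝ^{m×n} have a thin singular value decomposition A = W Σ Vᵀ (W ∈ ℝ^{m×n} with WᵀW = I_n, V ∈ ℝ^{n×n} orthogonal, Σ diagonal with nonnegative entries). Then for every Q ∈ ℝ^{m×n} with orthonormal columns (QᵀQ = I_n), tr(Qᵀ A) ≤ tr(Σ), and equality holds for Q = W Vᵀ, i.e., tr((W Vᵀ)ᵀ A) = tr(Σ). -/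
open Matrix

theorem trace_bound_orthonormal (m n : ℕ) (hmn : n ≤ m)
    (A W : Matrix (Fin m) (Fin n) ℝ) (S V : Matrix (Fin n) (Fin n) ℝ)
    (hW : Wᵀ * W = 1) (hV : Vᵀ * V = 1)
    (hS : S.IsDiag) (hSnonneg : ∀ i, 0 ≤ S i i)
    (hSVD : A = W * S * Vᵀ) :
    (∀ Q : Matrix (Fin m) (Fin n) ℝ, Qᵀ * Q = 1 → (Qᵀ * A).trace ≤ S.trace) ∧
      ((W * Vᵀ)ᵀ * A).trace = S.trace := by
  constructor
  · intro Q hQ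
    set M : Matrix (Fin n) (Fin n) ℝ := Vᵀ * Qᵀ * W with hM
    have hQV : (Q * V)ᵀ * (Q * V) = 1 := by
      rw [transpose_mul, Matrix.mul_assoc, ← Matrix.mul_assoc Qᵀ, hQ,
        Matrix.one_mul, hV]
    have key : ∀ i, M i i ≤ 1 := by
      intro i
      have h1 : ∑ k, ((Q * V) k i) ^ 2 = 1 := by
        have := congrFun (congrFun hQV i) i
        simpa [Matrix.mul_apply, Matrix.one_apply, sq, mul_comm] using this
      have h2 : ∑ k, (W k i) ^ 2 = 1 := by
        have := congrFun (congrFun hW i) i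
        simpa [Matrix.mul_apply, Matrix.one_apply, sq] using this
      have hMi : M i i = ∑ k, (Q * V) k i * W k i := by
        rw [hM, ← transpose_mul]
        simp [Matrix.mul_apply, mul_comm]
      have hcs := Finset.sum_mul_sq_le_sq_mul_sq Finset.univ
        (fun k => (Q * V) k i) (fun k => W k i)
      rw [h1, h2, mul_one] at hcs
      rw [hMi]
      nlinarith [hcs]
    have htr : (Qᵀ * A).trace = ∑ i, M i i * S i i := by
      rw [hSVD, show Qᵀ * (W * S * Vᵀ) = (Qᵀ * W * S) * Vᵀ by
        simp [Matrix.mul_assoc], Matrix.trace_mul_comm]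
      rw [Matrix.trace]
      apply Finset.sum_congr rfl
      intro i _
      rw [Matrix.diag_apply, show Vᵀ * (Qᵀ * W * S) = M * S by
        simp [hM, Matrix.mul_assoc], Matrix.mul_apply]
      rw [Finset.sum_eq_single i]
      · intro j _ hj
        rw [hS hj, mul_zero]
      · intro h; exact absurd (Finset.mem_univ i) h
    rw [htr, Matrix.trace]
    apply Finset.sum_le_sum
    intro i _
    simpa using mul_le_of_le_one_left (hSnonneg i) (key i)
  · rw [hSVD, transpose_mul, transpose_transpose,
      show V * Wᵀ * (W * S * Vᵀ) = V * (Wᵀ * W) * S * Vᵀ by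
        simp [Matrix.mul_assoc], hW, Matrix.mul_one,
      show V * S * Vᵀ = V * (S * Vᵀ) by simp [Matrix.mul_assoc],
      Matrix.trace_mul_comm, Matrix.mul_assoc, hV, Matrix.mul_one]
end

section
/- Let 2 ≤ K₁ ≤ K₂ ≤ d, let U₂ ∈ ℝ^{d×K₂} have orthonormal columns, and let U₁ ∈ ℝ^{d×K₁} consist of the first K₁ columns of U₂. Let E₁ = sqrt(K₁/(K₁−1)) · U₁ · P_{K₁} and E₂ = sqrt(K₂/(K₂−1)) · U₂ · P_{K₂} be the associated simplex ETF matrices, with columns e_k^{(1)} and e_k^{(2)} respectively. Then for every k ≤ K₁, the inner product between the old and the expanded ETF vertex for class k satisfies ⟨e_k^{(1)}, e_k^{(2)}⟩ = sqrt( (K₁−1)·K₂ / (K₁·(K₂−1)) ). -/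
open Matrix

theorem ProNC_vertex_shift (d K₁ K₂ : ℕ) (hK₁ : 2 ≤ K₁) (h12 : K₁ ≤ K₂) (h2d : K₂ ≤ d)
    (U₂ : Matrix (Fin d) (Fin K₂) ℝ) (hU₂ : U₂ᵀ * U₂ = 1)
    (U₁ : Matrix (Fin d) (Fin K₁) ℝ)
    (hU₁ : ∀ (i : Fin d) (k : Fin K₁), U₁ i k = U₂ i (Fin.castLE h12 k))
    (E₁ : Matrix (Fin d) (Fin K₁) ℝ)
    (hE₁ : E₁ = Real.sqrt ((K₁ : ℝ) / ((K₁ : ℝ) - 1)) • (U₁ * centering K₁))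
    (E₂ : Matrix (Fin d) (Fin K₂) ℝ)
    (hE₂ : E₂ = Real.sqrt ((K₂ : ℝ) / ((K₂ : ℝ) - 1)) • (U₂ * centering K₂)) :
    ∀ k : Fin K₁,
      (fun i => E₁ i k) ⬝ᵥ (fun i => E₂ i (Fin.castLE h12 k)) =
        Real.sqrt (((K₁ : ℝ) - 1) * K₂ / (K₁ * ((K₂ : ℝ) - 1))) := by
  intro k
  have hK1R : (2:ℝ) ≤ (K₁:ℝ) := by exact_mod_cast hK₁
  have hK2R : (2:ℝ) ≤ (K₂:ℝ) := by exact_mod_cast le_trans hK₁ h12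
  have hK1pos : (0:ℝ) < (K₁:ℝ) - 1 := by linarith
  have hK2pos : (0:ℝ) < (K₂:ℝ) - 1 := by linarith
  have hK1ne : (K₁:ℝ) ≠ 0 := by positivity
  have hK2ne : (K₂:ℝ) ≠ 0 := by positivity
  set c₁ := Real.sqrt ((K₁ : ℝ) / ((K₁ : ℝ) - 1)) with hc₁
  set c₂ := Real.sqrt ((K₂ : ℝ) / ((K₂ : ℝ) - 1)) with hc₂
  have key : ∀ a b : Fin K₂, (∑ i, U₂ i a * U₂ i b) = if a = b then (1:ℝ) else 0 := by
    intro a b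
    have h := congrFun (congrFun hU₂ a) b
    simpa [Matrix.mul_apply, Matrix.transpose_apply, Matrix.one_apply] using h
  have hcent : ∀ (K : ℕ) (a b : Fin K),
      centering K a b = (if a = b then (1:ℝ) else 0) - (K:ℝ)⁻¹ := by
    intro K a b
    simp [centering, Matrix.sub_apply, Matrix.one_apply]
  have hdot : (fun i => E₁ i k) ⬝ᵥ (fun i => E₂ i (Fin.castLE h12 k))
      = c₁ * c₂ * ∑ j₁ : Fin K₁,
          centering K₁ j₁ k * centering K₂ (Fin.castLE h12 j₁) (Fin.castLE h12 k) := by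
    simp only [dotProduct, hE₁, hE₂, Matrix.smul_apply, smul_eq_mul, Matrix.mul_apply, hU₁,
      Finset.mul_sum, Finset.sum_mul]
    rw [Finset.sum_comm]
    conv_lhs => enter [2, x1]; rw [Finset.sum_comm]
    rw [Finset.sum_comm]
    refine Finset.sum_congr rfl fun i _ => ?_
    have hterm : ∀ x1 : Fin K₂,
        (∑ x : Fin d,
          c₁ * (U₂ x (Fin.castLE h12 i) * centering K₁ i k) *
            (c₂ * (U₂ x x1 * centering K₂ x1 (Fin.castLE h12 k))))
        = (if Fin.castLE h12 i = x1 then (1:ℝ) else 0) *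
            (c₁ * c₂ * centering K₁ i k * centering K₂ x1 (Fin.castLE h12 k)) := by
      intro x1
      rw [← key, Finset.sum_mul]
      exact Finset.sum_congr rfl fun x _ => by ring
    simp only [hterm, ite_mul, one_mul, zero_mul, Finset.sum_ite_eq, Finset.mem_univ, if_true]
    ring
  rw [hdot]
  have hcast : ∀ j : Fin K₁, (Fin.castLE h12 j = Fin.castLE h12 k) ↔ j = k := by
    intro j
    exact ⟨fun h => Fin.castLE_injective h12 h, fun h => by rw [h]⟩
  have hsum : (∑ j₁ : Fin K₁,
      centering K₁ j₁ k * centering K₂ (Fin.castLE h12 j₁) (Fin.castLE h12 k))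
      = ((K₁:ℝ) - 1) / K₁ := by
    have hf : ∀ j₁ : Fin K₁,
        centering K₁ j₁ k * centering K₂ (Fin.castLE h12 j₁) (Fin.castLE h12 k)
        = ((if j₁ = k then (1:ℝ) else 0) - (K₁:ℝ)⁻¹) *
            ((if j₁ = k then (1:ℝ) else 0) - (K₂:ℝ)⁻¹) := by
      intro j₁
      rw [hcent, hcent]
      congr 2
      simp [hcast j₁]
    simp only [hf]
    rw [← Finset.add_sum_erase Finset.univ _ (Finset.mem_univ k)]
    have holl : ∀ j ∈ Finset.univ.erase k,
        ((if j = k then (1:ℝ) else 0) - (K₁:ℝ)⁻¹) *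
          ((if j = k then (1:ℝ) else 0) - (K₂:ℝ)⁻¹)
        = (K₁:ℝ)⁻¹ * (K₂:ℝ)⁻¹ := by
      intro j hj
      rw [if_neg (Finset.ne_of_mem_erase hj)]
      ring
    rw [Finset.sum_congr rfl holl, Finset.sum_const, if_pos rfl]
    have hcard : ((Finset.univ.erase k).card : ℝ) = (K₁:ℝ) - 1 := by
      rw [Finset.card_erase_of_mem (Finset.mem_univ k)]
      simp only [Finset.card_univ, Fintype.card_fin]
      rw [Nat.cast_sub (le_trans one_le_two hK₁)]
      simp
    rw [nsmul_eq_mul, hcard]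
    field_simp
    ring
  rw [hsum, hc₁, hc₂]
  have hratio : ((K₁:ℝ) - 1) / K₁ = Real.sqrt ((((K₁:ℝ) - 1) / K₁) ^ 2) := by
    rw [Real.sqrt_sq (by positivity)]
  rw [hratio, ← Real.sqrt_mul (by positivity), ← Real.sqrt_mul (by positivity)]
  congr 1
  field_simp
end
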